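/- Let $X = \big[\bigoplus_{k=1}^\infty X_k\big]_{\ell_1}$ be the $\ell_1$-sum of Banach spaces $X_k$. If $X$ has the Bishop-Phelps-Bollobás property for numerical radius with function $\eta$, then each $X_i$ has the Bishop-Phelps-Bollobás property for numerical radius with the same function $\eta$. -/

import Mathlib

open NormedSpace
open scoped ENNReal NNReal

/-- The numerical radius of a bounded linear operator `T` on a Banach space `X`. -/
noncomputable def nuRad {X : Type*} [NormedAddCommGroup X] [NormedSpace ℝ X]
    (T : X →L[ℝ] X) : ℝ :=
  sSup {r : ℝ | ∃ (x : X) (f : StrongDual ℝ X), ‖x‖ = 1 ∧ ‖f‖ = 1 ∧ f x = 1 ∧ r = |f (T x)|}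

section Aux

variable {Y : Type*} [NormedAddCommGroup Y] [NormedSpace ℝ Y]

lemma nuRad_bddAbove (T : Y →L[ℝ] Y) :
    BddAbove {r : ℝ | ∃ (x : Y) (f : StrongDual ℝ Y), ‖x‖ = 1 ∧ ‖f‖ = 1 ∧ f x = 1 ∧ r = |f (T x)|} := by
  refine ⟨‖T‖, ?_⟩
  rintro r ⟨x, f, hx, hf, -, rfl⟩
  calc |f (T x)| = ‖f (T x)‖ := (Real.norm_eq_abs _).symm
    _ ≤ ‖f‖ * ‖T x‖ := f.le_opNorm _
    _ = ‖T x‖ := by rw [hf, one_mul]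
    _ ≤ ‖T‖ * ‖x‖ := T.le_opNorm x
    _ = ‖T‖ := by rw [hx, mul_one]

lemma le_nuRad (T : Y →L[ℝ] Y) {x : Y} {f : StrongDual ℝ Y} (hx : ‖x‖ = 1) (hf : ‖f‖ = 1)
    (hfx : f x = 1) : |f (T x)| ≤ nuRad T :=
  le_csSup (nuRad_bddAbove T) ⟨x, f, hx, hf, hfx, rfl⟩

lemma nuRad_le (T : Y →L[ℝ] Y) {c : ℝ} (hc : 0 ≤ c)
    (hub : ∀ (x : Y) (f : StrongDual ℝ Y), ‖x‖ = 1 → ‖f‖ = 1 → f x = 1 → |f (T x)| ≤ c) :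
    nuRad T ≤ c := by
  refine Real.sSup_le ?_ hc
  rintro r ⟨x, f, hx, hf, hfx, rfl⟩
  exact hub x f hx hf hfx

lemma norm_eq_one_of_attain (φ : StrongDual ℝ Y) (w : Y) (hle : ‖φ‖ ≤ 1) (hw : ‖w‖ = 1)
    (hφw : φ w = 1) : ‖φ‖ = 1 := by
  refine le_antisymm hle ?_
  calc (1 : ℝ) = ‖φ w‖ := by rw [hφw]; simp
    _ ≤ ‖φ‖ * ‖w‖ := φ.le_opNorm w
    _ = ‖φ‖ := by rw [hw, mul_one]

lemma eq_of_hasSum_le {f g : ℕ → ℝ} {a : ℝ} (hle : ∀ k, f k ≤ g k)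
    (hf : HasSum f a) (hg : HasSum g a) (k : ℕ) : f k = g k := by
  by_contra hne
  exact absurd (hasSum_lt hle (lt_of_le_of_ne (hle k) hne) hf hg) (lt_irrefl a)

end Aux

section L1

variable {X : ℕ → Type*} [∀ k, NormedAddCommGroup (X k)] [∀ k, NormedSpace ℝ (X k)]

lemma norm_lpsingle {k : ℕ} (a : X k) : ‖(lp.single 1 k a : lp X 1)‖ = ‖a‖ := by
  have h := lp.norm_single (p := (1 : ℝ≥0∞)) (E := X) (by norm_num)
      k a
  simpa [lp.single_apply_self] using h

lemma hasSum_norm1 (z : lp X 1) : HasSum (fun k => ‖z k‖) ‖z‖ := by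
  have h := lp.hasSum_norm (p := (1 : ℝ≥0∞)) (by norm_num) z
  simpa using h

lemma hasSum_single1 (z : lp X 1) :
    HasSum (fun k => (lp.single 1 k (z k) : lp X 1)) z :=
  lp.hasSum_single ENNReal.one_ne_top z

lemma norm_split (i : ℕ) (z : lp X 1) :
    ‖z‖ = ‖z i‖ + ‖z - lp.single 1 i (z i)‖ := by
  have h := lp.norm_compl_sum_single (p := (1 : ℝ≥0∞)) (E := X) (by norm_num) z {i}
  simp only [ENNReal.toReal_one, Real.rpow_one, Finset.sum_singleton] at h
  linarith

variable (X) in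
noncomputable def inclL1 (i : ℕ) : X i →L[ℝ] lp X 1 :=
  LinearMap.mkContinuous
    { toFun := fun a => lp.single 1 i a
      map_add' := fun a b => by
        refine lp.ext (funext fun j => ?_)
        by_cases hj : j = i
        · subst hj; simp [lp.single_apply_self]
        · simp [lp.single_apply_ne _ _ _ hj]
      map_smul' := fun c a => by simp }
    1 (fun a => by simp [norm_lpsingle])

@[simp] lemma inclL1_apply (i : ℕ) (a : X i) : inclL1 X i a = lp.single 1 i a := rfl

lemma inclL1_norm_le (i : ℕ) : ‖inclL1 X i‖ ≤ 1 :=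
  LinearMap.mkContinuous_norm_le _ zero_le_one _

variable (X) in
noncomputable def projL1 (i : ℕ) : lp X 1 →L[ℝ] X i :=
  LinearMap.mkContinuous
    { toFun := fun z => z i
      map_add' := fun a b => by simp
      map_smul' := fun c a => by simp }
    1 (fun z => by show ‖z i‖ ≤ 1 * ‖z‖; simpa using lp.norm_apply_le_norm one_ne_zero z i)

@[simp] lemma projL1_apply (i : ℕ) (z : lp X 1) : projL1 X i z = z i := rfl

lemma projL1_norm_le (i : ℕ) : ‖projL1 X i‖ ≤ 1 :=
  LinearMap.mkContinuous_norm_le _ zero_le_one _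

lemma lpsingle_zero (k : ℕ) : (lp.single 1 k (0 : X k) : lp X 1) = 0 := by
  refine lp.ext (funext fun j => ?_)
  by_cases hj : j = k
  · subst hj; simp [lp.single_apply_self]
  · simp [lp.single_apply_ne _ _ _ hj]

lemma pair_coord {z : lp X 1} {γ : StrongDual ℝ (lp X 1)} (hγ : ‖γ‖ = 1) (hz : ‖z‖ = 1)
    (hγz : γ z = 1) (k : ℕ) : γ (lp.single 1 k (z k)) = ‖z k‖ := by
  have h1 : HasSum (fun j => γ (lp.single 1 j (z j))) 1 := by
    simpa [hγz] using (hasSum_single1 z).mapL γ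
  have h2 : HasSum (fun j => ‖z j‖) 1 := hz ▸ hasSum_norm1 z
  have hle : ∀ j, γ (lp.single 1 j (z j)) ≤ ‖z j‖ := fun j => by
    calc γ (lp.single 1 j (z j)) ≤ |γ (lp.single 1 j (z j))| := le_abs_self _
      _ = ‖γ (lp.single 1 j (z j))‖ := (Real.norm_eq_abs _).symm
      _ ≤ ‖γ‖ * ‖(lp.single 1 j (z j) : lp X 1)‖ := γ.le_opNorm _
      _ = ‖z j‖ := by rw [hγ, one_mul, norm_lpsingle]
  exact eq_of_hasSum_le hle h1 h2 k

end L1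

/-- The Bishop-Phelps-Bollobás property for numerical radius, with function `η`. -/
def BPBnuWith (X : Type*) [NormedAddCommGroup X] [NormedSpace ℝ X] (η : ℝ → ℝ) : Prop :=
  ∀ ε : ℝ, 0 < ε → ε < 1 → 0 < η ε ∧
    ∀ (T : X →L[ℝ] X) (x : X) (f : StrongDual ℝ X),
      nuRad T = 1 → ‖x‖ = 1 → ‖f‖ = 1 → f x = 1 → 1 - η ε < |f (T x)| →
      ∃ (S : X →L[ℝ] X) (y : X) (g : StrongDual ℝ X),
        ‖y‖ = 1 ∧ ‖g‖ = 1 ∧ g y = 1 ∧ nuRad S = 1 ∧ |g (S y)| = 1 ∧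
        ‖T - S‖ < ε ∧ ‖x - y‖ < ε ∧ ‖f - g‖ < ε

set_option maxHeartbeats 1600000 in
/-- If the `ℓ₁`-sum `X = [⊕ₖ Xₖ]_{ℓ₁}` (realized as `lp X 1`, the space of sequences with
`∑ₖ ‖xₖ‖ < ∞` and norm `∑ₖ ‖xₖ‖`) has the BPBp-nu with function `η`, then each `Xᵢ` has the
BPBp-nu with the same function `η`. -/
theorem stmt9 (X : ℕ → Type*) [∀ k, NormedAddCommGroup (X k)] [∀ k, NormedSpace ℝ (X k)]
    [∀ k, CompleteSpace (X k)] (η : ℝ → ℝ)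
    (h : BPBnuWith (lp X 1) η) :
    ∀ i, BPBnuWith (X i) η := by
  intro i ε hε hε1
  obtain ⟨hη, H⟩ := h ε hε hε1
  refine ⟨hη, ?_⟩
  intro T x f hT hx hf hfx hclose
  classical
  set J : X i →L[ℝ] lp X 1 := inclL1 X i with hJ
  set P : lp X 1 →L[ℝ] X i := projL1 X i with hP
  have hPJ : ∀ a : X i, P (J a) = a := fun a => by
    simp [hJ, hP, lp.single_apply_self]
  have hJnorm : ∀ a : X i, ‖J a‖ = ‖a‖ := fun a => by
    simp [hJ, norm_lpsingle]
  have hPle : ∀ z : lp X 1, ‖P z‖ ≤ ‖z‖ := fun z => by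
    simpa [hP] using lp.norm_apply_le_norm one_ne_zero z i
  set Q : lp X 1 →L[ℝ] lp X 1 := J.comp P with hQdef
  have hQJ : ∀ a : X i, Q (J a) = J a := fun a => by
    simp [hQdef, hPJ]
  have hsplit : ∀ z : lp X 1, ‖z‖ = ‖P z‖ + ‖z - Q z‖ := fun z => by
    simpa [hQdef, hJ, hP] using norm_split i z
  -- the upstairs data
  set T' : lp X 1 →L[ℝ] lp X 1 := (J.comp T).comp P with hT'def
  set x' : lp X 1 := J x with hx'def
  set f' : StrongDual ℝ (lp X 1) := f.comp P with hf'def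
  have hQT' : ∀ z : lp X 1, Q (T' z) = T' z := fun z => by
    simp [hQdef, hT'def, hPJ]
  have hx' : ‖x'‖ = 1 := by rw [hx'def, hJnorm, hx]
  have hf'x' : f' x' = 1 := by
    simp only [hf'def, hx'def, ContinuousLinearMap.comp_apply, hPJ, hfx]
  have hf'le : ‖f'‖ ≤ 1 := by
    refine ContinuousLinearMap.opNorm_le_bound _ zero_le_one (fun z => ?_)
    calc ‖f' z‖ = ‖f (P z)‖ := rfl
      _ ≤ ‖f‖ * ‖P z‖ := f.le_opNorm _
      _ = ‖P z‖ := by rw [hf, one_mul]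
      _ ≤ ‖z‖ := hPle z
      _ = 1 * ‖z‖ := (one_mul _).symm
  have hf' : ‖f'‖ = 1 := norm_eq_one_of_attain f' x' hf'le hx' hf'x'
  -- numerical radius of T' is 1
  have hub' : ∀ (z : lp X 1) (γ : StrongDual ℝ (lp X 1)), ‖z‖ = 1 → ‖γ‖ = 1 → γ z = 1 →
      |γ (T' z)| ≤ 1 := by
    intro z γ hz hγ hγz
    have hTz : T' z = J (T (z i)) := by
      simp [hT'def, hP]
    by_cases hzi : (z : ∀ k, X k) i = 0
    · rw [hTz, hzi]
      simp
    · have hni : (0 : ℝ) < ‖(z : ∀ k, X k) i‖ := norm_pos_iff.mpr hzi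
      set u : X i := ‖(z : ∀ k, X k) i‖⁻¹ • (z : ∀ k, X k) i with hu
      have hun : ‖u‖ = 1 := by
        rw [hu, norm_smul, Real.norm_eq_abs, abs_inv, abs_norm]
        exact inv_mul_cancel₀ hni.ne'
      set φ : StrongDual ℝ (X i) := γ.comp J with hφ
      have hcoord : γ (J ((z : ∀ k, X k) i)) = ‖(z : ∀ k, X k) i‖ := by
        simpa [hJ] using pair_coord hγ hz hγz i
      have hφu : φ u = 1 := by
        rw [hφ, hu]
        simp only [ContinuousLinearMap.comp_apply, map_smul, smul_eq_mul]
        rw [hcoord]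
        exact inv_mul_cancel₀ hni.ne'
      have hφle : ‖φ‖ ≤ 1 := by
        refine ContinuousLinearMap.opNorm_le_bound _ zero_le_one (fun a => ?_)
        calc ‖φ a‖ = ‖γ (J a)‖ := rfl
          _ ≤ ‖γ‖ * ‖J a‖ := γ.le_opNorm _
          _ = ‖a‖ := by rw [hγ, one_mul, hJnorm]
          _ = 1 * ‖a‖ := (one_mul _).symm
      have hφn : ‖φ‖ = 1 := norm_eq_one_of_attain φ u hφle hun hφu
      have key : |φ (T u)| ≤ 1 := by rw [← hT]; exact le_nuRad T hun hφn hφu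
      have heq : γ (T' z) = ‖(z : ∀ k, X k) i‖ * φ (T u) := by
        rw [hTz, hφ]
        simp only [ContinuousLinearMap.comp_apply, hu, map_smul, smul_eq_mul]
        rw [← mul_assoc, mul_inv_cancel₀ hni.ne', one_mul]
      rw [heq, abs_mul, abs_of_pos hni]
      calc ‖(z : ∀ k, X k) i‖ * |φ (T u)| ≤ ‖(z : ∀ k, X k) i‖ * 1 :=
            mul_le_mul_of_nonneg_left key hni.le
        _ = ‖(z : ∀ k, X k) i‖ := mul_one _
        _ ≤ ‖z‖ := lp.norm_apply_le_norm one_ne_zero z i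
        _ = 1 := hz
  have hT'1 : nuRad T' = 1 := by
    refine le_antisymm (nuRad_le T' zero_le_one hub') ?_
    rw [← hT]
    refine Real.sSup_le ?_ (le_trans (abs_nonneg _) (le_nuRad T' hx' hf' hf'x'))
    rintro r ⟨u, φ, hu, hφ, hφu, rfl⟩
    have h1 : ‖J u‖ = 1 := by rw [hJnorm, hu]
    have hc : (φ.comp P) (J u) = 1 := by
      simp only [ContinuousLinearMap.comp_apply, hPJ, hφu]
    have h2le : ‖φ.comp P‖ ≤ 1 := by
      refine ContinuousLinearMap.opNorm_le_bound _ zero_le_one (fun z => ?_)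
      calc ‖φ (P z)‖ ≤ ‖φ‖ * ‖P z‖ := φ.le_opNorm _
        _ = ‖P z‖ := by rw [hφ, one_mul]
        _ ≤ ‖z‖ := hPle z
        _ = 1 * ‖z‖ := (one_mul _).symm
    have h2 : ‖φ.comp P‖ = 1 := norm_eq_one_of_attain _ _ h2le h1 hc
    have h3 : |(φ.comp P) (T' (J u))| ≤ nuRad T' := le_nuRad T' h1 h2 hc
    have heq : (φ.comp P) (T' (J u)) = φ (T u) := by
      simp only [ContinuousLinearMap.comp_apply, hT'def, hPJ]
    rwa [heq] at h3
  have hclose' : 1 - η ε < |f' (T' x')| := by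
    have heq : f' (T' x') = f (T x) := by
      simp only [hf'def, hT'def, hx'def, ContinuousLinearMap.comp_apply, hPJ]
    rwa [heq]
  obtain ⟨S', y', g', hy', hg', hg'y', hνS', hatt', hTS', hxy', hfg'⟩ :=
    H T' x' f' hT'1 hx' hf' hf'x' hclose'
  -- spreading of the norming functional
  have hg'bound : ∀ w : lp X 1, |g' w| ≤ ‖w‖ := fun w => by
    calc |g' w| = ‖g' w‖ := (Real.norm_eq_abs _).symm
      _ ≤ ‖g'‖ * ‖w‖ := g'.le_opNorm _
      _ = ‖w‖ := by rw [hg', one_mul]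
  have hspread : ∀ k, g' (lp.single 1 k ((y' : ∀ j, X j) k)) = ‖(y' : ∀ j, X j) k‖ :=
    pair_coord hg' hy' hg'y'
  set b : X i := (y' : ∀ j, X j) i with hb
  have hPy' : P y' = b := rfl
  have hPxy' : P (x' - y') = x - b := by
    rw [map_sub]
    have : P x' = x := by rw [hx'def, hPJ]
    rw [this, hPy']
  have hxble : ‖x - b‖ ≤ ‖x' - y'‖ := by
    rw [← hPxy']; exact hPle _
  have hxb : ‖x - b‖ < ε := lt_of_le_of_lt hxble hxy'
  have hbn : (0 : ℝ) < ‖b‖ := by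
    have htri : ‖x‖ ≤ ‖x - b‖ + ‖b‖ := by
      simpa using norm_add_le (x - b) b
    rw [hx] at htri
    linarith
  set y : X i := ‖b‖⁻¹ • b with hy
  have hyn : ‖y‖ = 1 := by
    rw [hy, norm_smul, Real.norm_eq_abs, abs_inv, abs_norm]
    exact inv_mul_cancel₀ hbn.ne'
  set g : StrongDual ℝ (X i) := g'.comp J with hg
  have hgb : g b = ‖b‖ := by
    rw [hg]
    simpa [hJ, hb] using hspread i
  have hgy : g y = 1 := by
    rw [hy, map_smul, smul_eq_mul, hgb]
    exact inv_mul_cancel₀ hbn.ne'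
  have hgle : ‖g‖ ≤ 1 := by
    refine ContinuousLinearMap.opNorm_le_bound _ zero_le_one (fun a => ?_)
    calc ‖g' (J a)‖ ≤ ‖g'‖ * ‖J a‖ := g'.le_opNorm _
      _ = ‖a‖ := by rw [hg', one_mul, hJnorm]
      _ = 1 * ‖a‖ := (one_mul _).symm
  have hgn : ‖g‖ = 1 := norm_eq_one_of_attain g y hgle hyn hgy
  -- spreading of the attainment of S'
  have habs_le : ∀ k, |g' (S' (lp.single 1 k ((y' : ∀ j, X j) k)))| ≤ ‖(y' : ∀ j, X j) k‖ := by
    intro k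
    by_cases hk : (y' : ∀ j, X j) k = 0
    · rw [hk]
      rw [lpsingle_zero]
      simp
    · have hkn : (0 : ℝ) < ‖(y' : ∀ j, X j) k‖ := norm_pos_iff.mpr hk
      set u : lp X 1 := ‖(y' : ∀ j, X j) k‖⁻¹ • (lp.single 1 k ((y' : ∀ j, X j) k) : lp X 1)
        with hudef
      have hun : ‖u‖ = 1 := by
        rw [hudef, norm_smul, Real.norm_eq_abs, abs_inv, abs_norm, norm_lpsingle]
        exact inv_mul_cancel₀ hkn.ne'
      have hgu : g' u = 1 := by
        rw [hudef, map_smul, smul_eq_mul, hspread k]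
        exact inv_mul_cancel₀ hkn.ne'
      have h1 : |g' (S' u)| ≤ 1 := by
        have := le_nuRad S' hun hg' hgu
        rwa [hνS'] at this
      have heq : g' (S' (lp.single 1 k ((y' : ∀ j, X j) k))) = ‖(y' : ∀ j, X j) k‖ * g' (S' u) := by
        rw [hudef, map_smul, map_smul, smul_eq_mul, ← mul_assoc, mul_inv_cancel₀ hkn.ne', one_mul]
      rw [heq, abs_mul, abs_of_pos hkn]
      calc ‖(y' : ∀ j, X j) k‖ * |g' (S' u)| ≤ ‖(y' : ∀ j, X j) k‖ * 1 :=
            mul_le_mul_of_nonneg_left h1 hkn.le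
        _ = ‖(y' : ∀ j, X j) k‖ := mul_one _
  have hsum_ops : HasSum (fun k => g' (S' (lp.single 1 k ((y' : ∀ j, X j) k)))) (g' (S' y')) := by
    simpa using (hasSum_single1 y').mapL (g'.comp S')
  have hsumnorm : HasSum (fun k => ‖(y' : ∀ j, X j) k‖) 1 := hy' ▸ hasSum_norm1 y'
  have hsummable_abs : Summable (fun k => |g' (S' (lp.single 1 k ((y' : ∀ j, X j) k)))|) :=
    Summable.of_nonneg_of_le (fun k => abs_nonneg _) habs_le hsumnorm.summable
  have htsum_le : ∑' k, |g' (S' (lp.single 1 k ((y' : ∀ j, X j) k)))| ≤ 1 := by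
    rw [← hsumnorm.tsum_eq]
    exact Summable.tsum_le_tsum habs_le hsummable_abs hsumnorm.summable
  have htsum_ge : (1 : ℝ) ≤ ∑' k, |g' (S' (lp.single 1 k ((y' : ∀ j, X j) k)))| := by
    have habs : |∑' k, g' (S' (lp.single 1 k ((y' : ∀ j, X j) k)))| = 1 := by
      rw [hsum_ops.tsum_eq]; exact hatt'
    calc (1 : ℝ) = |∑' k, g' (S' (lp.single 1 k ((y' : ∀ j, X j) k)))| := habs.symm
      _ ≤ ∑' k, |g' (S' (lp.single 1 k ((y' : ∀ j, X j) k)))| := by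
          simpa [Real.norm_eq_abs] using
            norm_tsum_le_tsum_norm (f := fun k => g' (S' (lp.single 1 k ((y' : ∀ j, X j) k))))
              (by simpa [Real.norm_eq_abs] using hsummable_abs)
  have htsum_eq : ∑' k, |g' (S' (lp.single 1 k ((y' : ∀ j, X j) k)))| = 1 :=
    le_antisymm htsum_le htsum_ge
  have hspread2 : ∀ k, |g' (S' (lp.single 1 k ((y' : ∀ j, X j) k)))| = ‖(y' : ∀ j, X j) k‖ :=
    eq_of_hasSum_le habs_le (htsum_eq ▸ hsummable_abs.hasSum) hsumnorm
  have hattb : |g' (S' (J b))| = ‖b‖ := by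
    simpa [hJ, hb] using hspread2 i
  -- the downstairs operator
  set Λ : X i →L[ℝ] ℝ := (g'.comp (S'.comp J)) - (g'.comp (Q.comp (S'.comp J))) with hΛ
  set S : X i →L[ℝ] X i := (P.comp (S'.comp J)) + Λ.smulRight y with hS
  have hSapp : ∀ u : X i, S u = P (S' (J u)) + (g' (S' (J u)) - g' (Q (S' (J u)))) • y := by
    intro u
    simp [hS, hΛ, ContinuousLinearMap.add_apply, ContinuousLinearMap.comp_apply,
      ContinuousLinearMap.smulRight_apply, ContinuousLinearMap.sub_apply]
  have hgP : ∀ z : lp X 1, g (P z) = g' (Q z) := fun z => by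
    rw [hg]; simp [hQdef]
  have hgS : ∀ u : X i, g (S u) = g' (S' (J u)) := by
    intro u
    rw [hSapp u, map_add, map_smul, smul_eq_mul, hgy, mul_one, hgP]
    ring
  have hgSy : |g (S y)| = 1 := by
    rw [hgS y]
    have hJy : J y = ‖b‖⁻¹ • J b := by rw [hy, map_smul]
    rw [hJy, map_smul, map_smul, smul_eq_mul, abs_mul, abs_inv, abs_norm, hattb]
    exact inv_mul_cancel₀ hbn.ne'
  -- numerical radius of S
  have hubS : ∀ (u : X i) (φ : StrongDual ℝ (X i)), ‖u‖ = 1 → ‖φ‖ = 1 → φ u = 1 →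
      |φ (S u)| ≤ 1 := by
    intro u φ hu hφ hφu
    set φ' : StrongDual ℝ (lp X 1) := (φ.comp P) + (φ y) • (g' - g'.comp Q) with hφ'
    have hφ'app : ∀ z : lp X 1, φ' z = φ (P z) + φ y * (g' z - g' (Q z)) := by
      intro z
      simp [hφ', ContinuousLinearMap.add_apply, ContinuousLinearMap.comp_apply,
        ContinuousLinearMap.smul_apply, ContinuousLinearMap.sub_apply, smul_eq_mul]
    have hφ'Ju : φ' (J u) = 1 := by
      rw [hφ'app, hPJ, hφu, hQJ, sub_self, mul_zero, add_zero]
    have hφyle : |φ y| ≤ 1 := by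
      calc |φ y| = ‖φ y‖ := (Real.norm_eq_abs _).symm
        _ ≤ ‖φ‖ * ‖y‖ := φ.le_opNorm _
        _ = 1 := by rw [hφ, hyn, one_mul]
    have hφ'le : ‖φ'‖ ≤ 1 := by
      refine ContinuousLinearMap.opNorm_le_bound _ zero_le_one (fun z => ?_)
      rw [hφ'app]
      calc ‖φ (P z) + φ y * (g' z - g' (Q z))‖
          ≤ ‖φ (P z)‖ + ‖φ y * (g' z - g' (Q z))‖ := norm_add_le _ _
        _ ≤ ‖P z‖ + ‖z - Q z‖ := by
            gcongr
            · calc ‖φ (P z)‖ ≤ ‖φ‖ * ‖P z‖ := φ.le_opNorm _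
                _ = ‖P z‖ := by rw [hφ, one_mul]
            · rw [Real.norm_eq_abs, abs_mul]
              have h1 : g' z - g' (Q z) = g' (z - Q z) := (map_sub g' z (Q z)).symm
              rw [h1]
              calc |φ y| * |g' (z - Q z)| ≤ 1 * ‖z - Q z‖ :=
                    mul_le_mul hφyle (hg'bound _) (abs_nonneg _) zero_le_one
                _ = ‖z - Q z‖ := one_mul _
        _ = ‖z‖ := (hsplit z).symm
        _ = 1 * ‖z‖ := (one_mul _).symm
    have hJu : ‖J u‖ = 1 := by rw [hJnorm, hu]
    have hφ'n : ‖φ'‖ = 1 := norm_eq_one_of_attain φ' (J u) hφ'le hJu hφ'Ju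
    have hkey : |φ' (S' (J u))| ≤ 1 := by
      have := le_nuRad S' hJu hφ'n hφ'Ju
      rwa [hνS'] at this
    have heq : φ (S u) = φ' (S' (J u)) := by
      rw [hSapp u, map_add, map_smul, smul_eq_mul, hφ'app]
      ring
    rwa [← heq] at hkey
  have hνS : nuRad S = 1 := by
    refine le_antisymm (nuRad_le S zero_le_one hubS) ?_
    have := le_nuRad S hyn hgn hgy
    rwa [hgSy] at this
  -- distance estimates
  have hTSle : ‖T - S‖ ≤ ‖T' - S'‖ := by
    refine ContinuousLinearMap.opNorm_le_bound _ (norm_nonneg _) (fun u => ?_)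
    set z : lp X 1 := (T' - S') (J u) with hzdef
    have hzz : z = T' (J u) - S' (J u) := by rw [hzdef, ContinuousLinearMap.sub_apply]
    have h1 : T u - P (S' (J u)) = P z := by
      rw [hzz, map_sub]
      have : P (T' (J u)) = T u := by
        rw [hT'def]
        simp only [ContinuousLinearMap.comp_apply, hPJ]
      rw [this]
    have hQz : z - Q z = -(S' (J u) - Q (S' (J u))) := by
      rw [hzz, map_sub, hQT']
      abel
    have h2 : g' (S' (J u)) - g' (Q (S' (J u))) = -(g' (z - Q z)) := by
      rw [hQz, map_neg, neg_neg, map_sub]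
    have hTSu : (T - S) u = P z + (g' (z - Q z)) • y := by
      rw [ContinuousLinearMap.sub_apply, hSapp u, h2, ← h1, neg_smul]
      abel
    calc ‖(T - S) u‖ = ‖P z + (g' (z - Q z)) • y‖ := by rw [hTSu]
      _ ≤ ‖P z‖ + ‖(g' (z - Q z)) • y‖ := norm_add_le _ _
      _ ≤ ‖P z‖ + ‖z - Q z‖ := by
          gcongr
          rw [norm_smul, hyn, mul_one, Real.norm_eq_abs]
          exact hg'bound _
      _ = ‖z‖ := (hsplit z).symm
      _ ≤ ‖T' - S'‖ * ‖J u‖ := (T' - S').le_opNorm (J u)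
      _ = ‖T' - S'‖ * ‖u‖ := by rw [hJnorm]
  have hTSfin : ‖T - S‖ < ε := lt_of_le_of_lt hTSle hTS'
  have hxyfin : ‖x - y‖ < ε := by
    have hble : ‖b‖ ≤ 1 := by
      have := lp.norm_apply_le_norm (E := X) one_ne_zero y' i
      rwa [hy'] at this
    have h1 : ‖b - y‖ = 1 - ‖b‖ := by
      have hby : b - y = (1 - ‖b‖⁻¹) • b := by
        rw [hy, sub_smul, one_smul]
      rw [hby, norm_smul, Real.norm_eq_abs]
      have hinv : (1 : ℝ) ≤ ‖b‖⁻¹ := (one_le_inv₀ hbn).mpr hble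
      rw [abs_of_nonpos (by linarith), neg_sub]
      field_simp
    have h2 : 1 - ‖b‖ = ‖y' - Q y'‖ := by
      have := hsplit y'
      rw [hy', hPy'] at this
      linarith
    have h3 : ‖x' - y'‖ = ‖x - b‖ + ‖y' - Q y'‖ := by
      have h4 := hsplit (x' - y')
      have h6 : (x' - y') - Q (x' - y') = -(y' - Q y') := by
        rw [map_sub]
        have : Q x' = x' := by rw [hx'def, hQJ]
        rw [this]
        abel
      rw [h4, hPxy', h6, norm_neg]
    calc ‖x - y‖ ≤ ‖x - b‖ + ‖b - y‖ := by
          simpa using norm_add_le (x - b) (b - y)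
      _ = ‖x - b‖ + ‖y' - Q y'‖ := by rw [h1, h2]
      _ = ‖x' - y'‖ := h3.symm
      _ < ε := hxy'
  have hfgfin : ‖f - g‖ < ε := by
    have hfgle : ‖f - g‖ ≤ ‖f' - g'‖ := by
      refine ContinuousLinearMap.opNorm_le_bound _ (norm_nonneg _) (fun u => ?_)
      have heq : (f - g) u = (f' - g') (J u) := by
        rw [ContinuousLinearMap.sub_apply, ContinuousLinearMap.sub_apply, hg, hf'def]
        simp only [ContinuousLinearMap.comp_apply, hPJ]
      rw [heq]
      calc ‖(f' - g') (J u)‖ ≤ ‖f' - g'‖ * ‖J u‖ := (f' - g').le_opNorm _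
        _ = ‖f' - g'‖ * ‖u‖ := by rw [hJnorm]
    exact lt_of_le_of_lt hfgle hfg'
  exact ⟨S, y, g, hyn, hgn, hgy, hνS, hgSy, hTSfin, hxyfin, hfgfin⟩
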